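/- Let S and S′ be finite subsets of ℝ × (0, ∞) such that within each of S and S′ no two distinct elements share the same first coordinate. If Σ_{(m,l) ∈ S} l·1(m ≤ x) = Σ_{(m,l) ∈ S′} l·1(m ≤ x) for every x ∈ ℝ, then S = S′. -/
import Mathlib


open Finset

/-- If the pointwise "jump sums" of `S'` dominate those of `S` (in fact agree), then `S ⊆ S'`. -/
lemma apf_subset_aux (S S' : Finset (ℝ × ℝ))
    (hS : ∀ p ∈ S, 0 < p.2)
    (hinjS : ∀ p ∈ S, ∀ q ∈ S, p.1 = q.1 → p = q)
    (hinjS' : ∀ p ∈ S', ∀ q ∈ S', p.1 = q.1 → p = q)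
    (key : ∀ a : ℝ, (∑ p ∈ S, if p.1 = a then p.2 else 0)
        = ∑ p ∈ S', if p.1 = a then p.2 else 0) :
    S ⊆ S' := by
  intro p hp
  have hsum : (∑ q ∈ S, if q.1 = p.1 then q.2 else 0) = p.2 := by
    rw [Finset.sum_eq_single_of_mem p hp]
    · simp
    · intro b hb hbp
      rw [if_neg]
      intro h
      exact hbp (hinjS b hb p hp h)
  have hpos : 0 < ∑ q ∈ S', if q.1 = p.1 then q.2 else 0 := by
    rw [← key p.1, hsum]; exact hS p hp
  obtain ⟨q, hq, hq0⟩ := Finset.exists_ne_zero_of_sum_ne_zero hpos.ne'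
  have hq1 : q.1 = p.1 := by
    by_contra h; simp [h] at hq0
  have hsum' : (∑ r ∈ S', if r.1 = p.1 then r.2 else 0) = q.2 := by
    rw [Finset.sum_eq_single_of_mem q hq]
    · simp [hq1]
    · intro b hb hbq
      rw [if_neg]
      intro h
      exact hbq (hinjS' b hb q hq (h.trans hq1.symm))
  have hq2 : q.2 = p.2 := by
    rw [← hsum', ← key p.1, hsum]
  have : q = p := Prod.ext hq1 hq2
  rwa [← this]

/-- Injectivity of the accumulated persistence function: if `S, S'` are finite sets of
(meanage, lifetime) pairs with positive lifetimes and pairwise distinct meanages within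
each set, and their accumulated persistence functions agree everywhere, then `S = S'`. -/
theorem apf_injective (S S' : Finset (ℝ × ℝ))
    (hS : ∀ p ∈ S, 0 < p.2) (hS' : ∀ p ∈ S', 0 < p.2)
    (hinjS : ∀ p ∈ S, ∀ q ∈ S, p.1 = q.1 → p = q)
    (hinjS' : ∀ p ∈ S', ∀ q ∈ S', p.1 = q.1 → p = q)
    (heq : ∀ x : ℝ,
      (∑ p ∈ S, p.2 * (if p.1 ≤ x then 1 else 0))
        = ∑ p ∈ S', p.2 * (if p.1 ≤ x then 1 else 0)) :
    S = S' := by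
  have heq' : ∀ x : ℝ, (∑ p ∈ S, if p.1 ≤ x then p.2 else 0)
      = ∑ p ∈ S', if p.1 ≤ x then p.2 else 0 := by
    intro x
    have := heq x
    simpa [mul_ite, mul_one, mul_zero] using this
  have key : ∀ a : ℝ, (∑ p ∈ S, if p.1 = a then p.2 else 0)
      = ∑ p ∈ S', if p.1 = a then p.2 else 0 := by
    intro a
    classical
    set T := ((S ∪ S').filter fun p => p.1 < a).image Prod.fst with hT
    set y := if h : T.Nonempty then T.max' h else a - 1 with hy
    have hya : y < a := by
      rw [hy]
      split_ifs with h
      · obtain ⟨p, hpf, hpe⟩ := Finset.mem_image.1 (T.max'_mem h)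
        rw [← hpe]
        exact (Finset.mem_filter.1 hpf).2
      · linarith
    have hy2 : ∀ p ∈ S ∪ S', p.1 < a → p.1 ≤ y := by
      intro p hp hpa
      have hmem : p.1 ∈ T := by
        rw [hT]
        exact Finset.mem_image.2 ⟨p, Finset.mem_filter.2 ⟨hp, hpa⟩, rfl⟩
      have hne : T.Nonempty := ⟨p.1, hmem⟩
      rw [hy, dif_pos hne]
      exact T.le_max' _ hmem
    have split : ∀ U : Finset (ℝ × ℝ), U ⊆ S ∪ S' →
        (∑ p ∈ U, if p.1 = a then p.2 else 0)
          = (∑ p ∈ U, if p.1 ≤ a then p.2 else 0)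
            - ∑ p ∈ U, if p.1 ≤ y then p.2 else 0 := by
      intro U hU
      rw [← Finset.sum_sub_distrib]
      apply Finset.sum_congr rfl
      intro p hp
      rcases lt_trichotomy p.1 a with h | h | h
      · rw [if_neg (ne_of_lt h), if_pos h.le, if_pos (hy2 p (hU hp) h)]
        ring
      · rw [if_pos h, if_pos h.le, if_neg (by rw [h]; exact not_le.2 hya)]
        ring
      · rw [if_neg (ne_of_gt h), if_neg (not_le.2 h), if_neg (not_le.2 (hya.trans h))]
        ring
    rw [split S Finset.subset_union_left, split S' Finset.subset_union_right,
      heq' a, heq' y]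
  exact Finset.Subset.antisymm
    (apf_subset_aux S S' hS hinjS hinjS' key)
    (apf_subset_aux S' S hS' hinjS' hinjS fun a => (key a).symm)
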